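/- Define θ^ε_{k,j} as in the model: for k₃ = 0, N ≤ |k_H| ≤ 2N, θ^ε_{k,1} = ±i/(C_{1,H}|k|) (sign depending on the half-lattice), θ^ε_{k,2} = 1/(C_{2,H}|k|^{γ/2}), with a_{k,1} = k^⊥/|k| ⊕ 0 and a_{k,2} = e₃. Let ∂Q̄_ρ(0) be the gradient at 0 of the off-diagonal covariance Q̄_ρ(x) = 2ρ ∑_{k₃=0} (θ_{k,1}θ_{k,2}^* a_{k,1}⊗a_{k,2} + θ_{k,2}θ_{k,1}^* a_{k,2}⊗a_{k,1}) e^{ik·x}. Then the Hilbert–Schmidt norm bound ‖∇Q̄_ρ(0)‖_{HS} ≤ 2√2 |ρ| ζ^N_{H,γ/2} N^{2−γ/2}/(C_{1,H}C_{2,H}) holds, where ζ^N_{H,γ/2} = N^{γ/2−2} ∑_{N ≤ |k_H| ≤ 2N} |k_H|^{−γ/2}. -/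

import Mathlib

/-!
Let `c_k` be the matrix coefficient of `e^{ik·x}` in `Q̄_ρ / 2ρ`. The gradient at `0` of the
mode `k` is the tensor `2ρ c_k ⊗ (i k_H, 0)`, whose Hilbert–Schmidt norm is `2|ρ| ‖c_k‖_HS |k|`.
As `a_{k,1}` and `a_{k,2}` are orthogonal unit vectors, `‖c_k‖_HS = √2 |θ_{k,1}| |θ_{k,2}|`, and
`|θ_{k,1}| |θ_{k,2}| |k| = |k|^{-γ/2}/(C₁C₂)`. Summing over the finitely many modes of the
annulus with the triangle inequality in `ℓ²` gives the `ζ`-term.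
-/

open MeasureTheory Real

/-- Euclidean norm of a point of `ℤ²`. -/
noncomputable def latNorm (k : ℤ × ℤ) : ℝ :=
  Real.sqrt ((k.1 : ℝ) ^ 2 + (k.2 : ℝ) ^ 2)

/-- Sign `±1` selecting the half-lattice `Γ₊` for horizontal modes (`k₃ = 0`). -/
noncomputable def latSgn (k : ℤ × ℤ) : ℝ :=
  if 0 < k.2 ∨ (k.2 = 0 ∧ 0 < k.1) then 1 else -1

/-- `θ^ε_{k,1} = ± i/(C_{1,H}|k|)`. -/
noncomputable def th1 (C1 : ℝ) (k : ℤ × ℤ) : ℂ :=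
  ((latSgn k : ℝ) : ℂ) * Complex.I / ((C1 : ℂ) * ((latNorm k : ℝ) : ℂ))

/-- `θ^ε_{k,2} = 1/(C_{2,H}|k|^{γ/2})`. -/
noncomputable def th2 (C2 γ : ℝ) (k : ℤ × ℤ) : ℂ :=
  ((1 / (C2 * latNorm k ^ (γ / 2)) : ℝ) : ℂ)

/-- `a_{k,1} = (k^⊥/|k|, 0)`. -/
noncomputable def avec1 (k : ℤ × ℤ) : Fin 3 → ℝ :=
  ![-(k.2 : ℝ) / latNorm k, (k.1 : ℝ) / latNorm k, 0]

/-- `a_{k,2} = e₃`. -/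
def avec2 : Fin 3 → ℝ := ![0, 0, 1]

/-- The off-diagonal covariance
`Q̄_ρ(z) = 2ρ ∑_{k₃=0, N ≤ |k_H| ≤ 2N} (θ₁θ₂* a₁⊗a₂ + θ₂θ₁* a₂⊗a₁) e^{ik·z}`
(matrix entry `(p,q)`). -/
noncomputable def Qrho (ρ C1 C2 γ : ℝ) (N : ℕ) (z : Fin 3 → ℝ) (p q : Fin 3) : ℂ :=
  2 * (ρ : ℂ) *
    ∑' k : ℤ × ℤ,
      if k ≠ 0 ∧ (N : ℝ) ≤ latNorm k ∧ latNorm k ≤ 2 * N then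
        (th1 C1 k * starRingEnd ℂ (th2 C2 γ k) * ((avec1 k p : ℝ) : ℂ) * ((avec2 q : ℝ) : ℂ) +
            th2 C2 γ k * starRingEnd ℂ (th1 C1 k) * ((avec2 p : ℝ) : ℂ) * ((avec1 k q : ℝ) : ℂ)) *
          Complex.exp (Complex.I * (((k.1 : ℝ) * z 0 + (k.2 : ℝ) * z 1 : ℝ) : ℂ))
      else 0

/-- `ζ^N_{H,j} = N^{j-2} ∑_{N ≤ |k_H| ≤ 2N} |k_H|^{-j}`. -/
noncomputable def zetaHN (N : ℕ) (j : ℝ) : ℝ :=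
  (N : ℝ) ^ (j - 2) *
    ∑' k : ℤ × ℤ,
      if k ≠ 0 ∧ (N : ℝ) ≤ latNorm k ∧ latNorm k ≤ 2 * N then latNorm k ^ (-j) else 0

theorem sqrt_sum_norm_finsetSum_sq_le {ι κ E : Type*} [Fintype ι] [NormedAddCommGroup E]
    (s : Finset κ) (f : κ → ι → E) :
    √(∑ i, ‖∑ k ∈ s, f k i‖ ^ 2) ≤ ∑ k ∈ s, √(∑ i, ‖f k i‖ ^ 2) := by
  have := norm_sum_le s fun k => WithLp.toLp 2 (f k)
  simpa [PiLp.norm_eq_of_L2, ← WithLp.toLp_sum] using this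

theorem abs_fst_le_latNorm (k : ℤ × ℤ) : |(k.1 : ℝ)| ≤ latNorm k := by
  rw [← Real.sqrt_sq_eq_abs]
  exact Real.sqrt_le_sqrt (le_add_of_nonneg_right (sq_nonneg _))

theorem abs_snd_le_latNorm (k : ℤ × ℤ) : |(k.2 : ℝ)| ≤ latNorm k := by
  rw [← Real.sqrt_sq_eq_abs]
  exact Real.sqrt_le_sqrt (le_add_of_nonneg_left (sq_nonneg _))

theorem latNorm_sq (k : ℤ × ℤ) : latNorm k ^ 2 = (k.1 : ℝ) ^ 2 + (k.2 : ℝ) ^ 2 :=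
  Real.sq_sqrt (by positivity)

theorem latNorm_pos {k : ℤ × ℤ} (hk : k ≠ 0) : 0 < latNorm k := by
  refine Real.sqrt_pos.2 ?_
  rcases k with ⟨a, b⟩
  by_cases ha : a = 0
  · have hb : b ≠ 0 := by rintro rfl; exact hk (by rw [ha]; rfl)
    positivity
  · positivity

open Classical in
noncomputable def annulus (N : ℕ) : Finset (ℤ × ℤ) :=
  (Finset.Icc (-(2 * N : ℤ)) (2 * N) ×ˢ Finset.Icc (-(2 * N : ℤ)) (2 * N)).filter
    fun k => k ≠ 0 ∧ (N : ℝ) ≤ latNorm k ∧ latNorm k ≤ 2 * N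

theorem mem_annulus {N : ℕ} {k : ℤ × ℤ} :
    k ∈ annulus N ↔ k ≠ 0 ∧ (N : ℝ) ≤ latNorm k ∧ latNorm k ≤ 2 * N := by
  refine ⟨fun h => (Finset.mem_filter.1 h).2, fun h => Finset.mem_filter.2 ⟨?_, h⟩⟩
  have h1 := (abs_fst_le_latNorm k).trans h.2.2
  have h2 := (abs_snd_le_latNorm k).trans h.2.2
  rw [abs_le] at h1 h2
  simp only [Finset.mem_product, Finset.mem_Icc]
  exact ⟨⟨by exact_mod_cast h1.1, by exact_mod_cast h1.2⟩, by exact_mod_cast h2.1,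
    by exact_mod_cast h2.2⟩

theorem tsum_ite_annulus {M : Type*} [AddCommMonoid M] [TopologicalSpace M] (N : ℕ)
    (f : ℤ × ℤ → M) :
    ∑' k, (if k ≠ 0 ∧ (N : ℝ) ≤ latNorm k ∧ latNorm k ≤ 2 * N then f k else 0) =
      ∑ k ∈ annulus N, f k := by
  rw [tsum_eq_sum (s := annulus N) fun k hk => if_neg (mt mem_annulus.2 hk)]
  exact Finset.sum_congr rfl fun k hk => if_pos (mem_annulus.1 hk)

theorem zetaHN_mul_rpow {N : ℕ} (hN : 1 ≤ N) (j : ℝ) :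
    zetaHN N j * (N : ℝ) ^ (2 - j) = ∑ k ∈ annulus N, latNorm k ^ (-j) := by
  have hN0 : (0 : ℝ) < N := by exact_mod_cast hN
  rw [zetaHN, tsum_ite_annulus, mul_right_comm, ← Real.rpow_add hN0]
  simp

theorem hasFDerivAt_mul_cexp_I_mul_zero {E : Type*} [NormedAddCommGroup E] [NormedSpace ℝ E]
    (c : ℂ) (ℓ : E →L[ℝ] ℝ) :
    HasFDerivAt (fun z => c * Complex.exp (Complex.I * (ℓ z : ℂ)))
      ((c * Complex.I) • Complex.ofRealCLM.comp ℓ) 0 := by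
  have h := (((Complex.ofRealCLM.comp ℓ).hasFDerivAt (x := 0)).const_mul Complex.I).cexp.const_mul c
  refine h.congr_fderiv ?_
  ext v
  simp [mul_assoc]

noncomputable def latPairing (k : ℤ × ℤ) : (Fin 3 → ℝ) →L[ℝ] ℝ :=
  (k.1 : ℝ) • ContinuousLinearMap.proj 0 + (k.2 : ℝ) • ContinuousLinearMap.proj 1

theorem latPairing_apply (k : ℤ × ℤ) (z : Fin 3 → ℝ) :
    latPairing k z = k.1 * z 0 + k.2 * z 1 := rfl

theorem sum_latPairing_single_sq (k : ℤ × ℤ) :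
    ∑ n : Fin 3, latPairing k (Pi.single n 1) ^ 2 = latNorm k ^ 2 := by
  simp [Fin.sum_univ_three, latPairing_apply, latNorm_sq]

noncomputable def modeCoeff (C1 C2 γ : ℝ) (k : ℤ × ℤ) (p q : Fin 3) : ℂ :=
  th1 C1 k * starRingEnd ℂ (th2 C2 γ k) * ((avec1 k p : ℝ) : ℂ) * ((avec2 q : ℝ) : ℂ) +
    th2 C2 γ k * starRingEnd ℂ (th1 C1 k) * ((avec2 p : ℝ) : ℂ) * ((avec1 k q : ℝ) : ℂ)

theorem Qrho_eq_sum (ρ C1 C2 γ : ℝ) (N : ℕ) (z : Fin 3 → ℝ) (p q : Fin 3) :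
    Qrho ρ C1 C2 γ N z p q = ∑ k ∈ annulus N,
      2 * ρ * modeCoeff C1 C2 γ k p q * Complex.exp (Complex.I * (latPairing k z : ℂ)) := by
  simp only [Qrho, tsum_ite_annulus, Finset.mul_sum, mul_assoc, modeCoeff, latPairing_apply]

theorem fderiv_Qrho_apply (ρ C1 C2 γ : ℝ) (N : ℕ) (p q : Fin 3) (v : Fin 3 → ℝ) :
    fderiv ℝ (fun z => Qrho ρ C1 C2 γ N z p q) 0 v = ∑ k ∈ annulus N,
      2 * ρ * modeCoeff C1 C2 γ k p q * (Complex.I * (latPairing k v : ℂ)) := by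
  simp_rw [Qrho_eq_sum]
  rw [(HasFDerivAt.fun_sum fun k _ => hasFDerivAt_mul_cexp_I_mul_zero _ (latPairing k)).fderiv]
  simp [mul_assoc]

theorem norm_th1_mul_norm_th2_mul_latNorm {C1 C2 : ℝ} (γ : ℝ) (hC1 : 0 < C1) (hC2 : 0 < C2)
    {k : ℤ × ℤ} (hk : k ≠ 0) :
    ‖th1 C1 k‖ * ‖th2 C2 γ k‖ * latNorm k = latNorm k ^ (-(γ / 2)) / (C1 * C2) := by
  have hr := latNorm_pos hk
  have hs : |latSgn k| = 1 := by unfold latSgn; split <;> simp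
  simp only [th1, th2, norm_div, norm_mul, Complex.norm_real, Real.norm_eq_abs, hs,
    Complex.norm_I, abs_of_pos hC1, abs_of_pos hC2, abs_of_pos hr,
    abs_of_pos (Real.rpow_pos_of_pos hr _), Real.rpow_neg hr.le, abs_one]
  field_simp

theorem sum_norm_modeCoeff_sq (C1 C2 γ : ℝ) {k : ℤ × ℤ} (hk : k ≠ 0) :
    ∑ p, ∑ q, ‖modeCoeff C1 C2 γ k p q‖ ^ 2 = 2 * (‖th1 C1 k‖ * ‖th2 C2 γ k‖) ^ 2 := by
  have hunit : (k.1 : ℝ) ^ 2 / latNorm k ^ 2 + (k.2 : ℝ) ^ 2 / latNorm k ^ 2 = 1 := by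
    rw [← add_div, ← latNorm_sq, div_self (pow_pos (latNorm_pos hk) 2).ne']
  simp only [Fin.sum_univ_three, modeCoeff, avec1, avec2, Matrix.cons_val, Complex.ofReal_zero,
    Complex.ofReal_one, mul_zero, mul_one, zero_add, add_zero, norm_mul, RCLike.norm_conj,
    Complex.norm_real, Real.norm_eq_abs, mul_pow, sq_abs, div_pow, neg_sq]
  linear_combination (2 * (‖th1 C1 k‖ * ‖th2 C2 γ k‖) ^ 2) * hunit

theorem sqrt_sum_norm_mode_sq (ρ : ℝ) {C1 C2 : ℝ} (γ : ℝ) (hC1 : 0 < C1) (hC2 : 0 < C2)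
    {k : ℤ × ℤ} (hk : k ≠ 0) :
    √(∑ p, ∑ q, ∑ n : Fin 3,
        ‖2 * ρ * modeCoeff C1 C2 γ k p q * (Complex.I * (latPairing k (Pi.single n 1) : ℂ))‖ ^ 2) =
      2 * |ρ| * √2 * (latNorm k ^ (-(γ / 2)) / (C1 * C2)) := by
  have hsplit : ∀ p q, ∑ n : Fin 3,
      ‖2 * ρ * modeCoeff C1 C2 γ k p q * (Complex.I * (latPairing k (Pi.single n 1) : ℂ))‖ ^ 2 =
        (2 * |ρ|) ^ 2 * ‖modeCoeff C1 C2 γ k p q‖ ^ 2 * latNorm k ^ 2 := by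
    intro p q
    simp only [norm_mul, Complex.norm_real, Complex.norm_I, Complex.norm_ofNat,
      Real.norm_eq_abs, mul_pow, sq_abs, one_mul, ← Finset.mul_sum, sum_latPairing_single_sq]
  simp only [hsplit, ← Finset.sum_mul, ← Finset.mul_sum, sum_norm_modeCoeff_sq C1 C2 γ hk,
    ← norm_th1_mul_norm_th2_mul_latNorm γ hC1 hC2 hk]
  have hr := (latNorm_pos hk).le
  rw [← Real.sqrt_sq (by positivity : 0 ≤ 2 * |ρ| * √2 * (‖th1 C1 k‖ * ‖th2 C2 γ k‖ * latNorm k))]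
  congr 1
  simp only [mul_pow, Real.sq_sqrt zero_le_two]
  ring

theorem stmt_15_general (ρ C1 C2 γ : ℝ) (N : ℕ)
    (hC1 : 0 < C1) (hC2 : 0 < C2) (hN : 1 ≤ N) :
    Real.sqrt (∑ p : Fin 3, ∑ q : Fin 3, ∑ n : Fin 3,
        ‖fderiv ℝ (fun z => Qrho ρ C1 C2 γ N z p q) 0 (Pi.single n 1)‖ ^ 2) ≤
      2 * Real.sqrt 2 * |ρ| * zetaHN N (γ / 2) * (N : ℝ) ^ (2 - γ / 2) / (C1 * C2) := by
  simp only [fderiv_Qrho_apply, ← Fintype.sum_prod_type']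
  calc _ ≤ ∑ k ∈ annulus N, √(∑ m : (Fin 3 × Fin 3) × Fin 3, ‖2 * ρ *
        modeCoeff C1 C2 γ k m.1.1 m.1.2 * (Complex.I * (latPairing k (Pi.single m.2 1) : ℂ))‖ ^ 2) :=
        sqrt_sum_norm_finsetSum_sq_le _ _
    _ = ∑ k ∈ annulus N, 2 * |ρ| * √2 * (latNorm k ^ (-(γ / 2)) / (C1 * C2)) := by
        refine Finset.sum_congr rfl fun k hk => ?_
        simp only [Fintype.sum_prod_type]
        rw [sqrt_sum_norm_mode_sq ρ γ hC1 hC2 (mem_annulus.1 hk).1]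
    _ = _ := by
        rw [← Finset.mul_sum, ← Finset.sum_div, ← zetaHN_mul_rpow hN]
        ring

/-- Hilbert–Schmidt bound on the gradient of the off-diagonal covariance at `0`:
`‖∇Q̄_ρ(0)‖_{HS} ≤ 2√2 |ρ| ζ^N_{H,γ/2} N^{2−γ/2}/(C_{1,H}C_{2,H})`. -/
theorem stmt_15 (ρ C1 C2 γ : ℝ) (N : ℕ)
    (hρ : |ρ| ≤ 1) (hC1 : 0 < C1) (hC2 : 0 < C2) (hγ : 4 ≤ γ) (hN : 1 ≤ N) :
    Real.sqrt (∑ p : Fin 3, ∑ q : Fin 3, ∑ n : Fin 3,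
        ‖fderiv ℝ (fun z => Qrho ρ C1 C2 γ N z p q) 0 (Pi.single n 1)‖ ^ 2) ≤
      2 * Real.sqrt 2 * |ρ| * zetaHN N (γ / 2) * (N : ℝ) ^ (2 - γ / 2) / (C1 * C2) :=
  stmt_15_general ρ C1 C2 γ N hC1 hC2 hN
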